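/- arXiv:2411.03390 — 6 statements merged into one kernel-verified Lean document; each statement's English description precedes it below -/
import Mathlib

section
/- Let k ≥ 1 be an integer and α ∈ (0,1]. If α/(1 - ln α) ≥ 2/(k+1), then ∫₀^α x^{1/k} dx ≥ ∫_{1-α}^1 x dx, i.e., (k/(k+1))·α^{(k+1)/k} ≥ (1 - (1-α)²)/2. -/
/-- If `k ≥ 1` and `α ∈ (0,1]` satisfy `α/(1 - ln α) ≥ 2/(k+1)`, then
`(k/(k+1))·α^((k+1)/k) ≥ (1 - (1-α)²)/2`. -/
theorem stmt1 (k : ℕ) (hk : 1 ≤ k) (α : ℝ) (hα0 : 0 < α) (hα1 : α ≤ 1)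
    (h : α / (1 - Real.log α) ≥ 2 / ((k : ℝ) + 1)) :
    (k : ℝ) / ((k : ℝ) + 1) * α ^ (((k : ℝ) + 1) / (k : ℝ)) ≥ (1 - (1 - α) ^ 2) / 2 := by
  have hkpos : (0:ℝ) < (k:ℝ) := by exact_mod_cast Nat.pos_of_ne_zero (by omega)
  have hlog : Real.log α ≤ 0 := Real.log_nonpos hα0.le hα1
  have hden : (0:ℝ) < 1 - Real.log α := by linarith
  have hk1 : (0:ℝ) < (k:ℝ) + 1 := by linarith
  have hcond : 2 * (1 - Real.log α) ≤ ((k:ℝ) + 1) * α := by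
    rw [ge_iff_le, div_le_div_iff₀ hk1 hden] at h
    linarith
  have hsplit : (((k:ℝ) + 1) / (k:ℝ)) = 1 + 1 / (k:ℝ) := by
    field_simp
  have hrpow : α ^ (((k:ℝ) + 1) / (k:ℝ)) = α * α ^ (1 / (k:ℝ)) := by
    rw [hsplit, Real.rpow_add hα0, Real.rpow_one]
  set L := α ^ (1 / (k:ℝ)) with hL
  have hexp : (k:ℝ) * L ≥ (k:ℝ) + Real.log α := by
    have h1 : L = Real.exp (Real.log α * (1 / (k:ℝ))) := Real.rpow_def_of_pos hα0 _
    have h2 := Real.add_one_le_exp (Real.log α * (1 / (k:ℝ)))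
    have h3 : (k:ℝ) * L ≥ (k:ℝ) * (Real.log α * (1 / (k:ℝ)) + 1) := by
      rw [h1]
      exact mul_le_mul_of_nonneg_left h2 hkpos.le
    have h4 : (k:ℝ) * (Real.log α * (1 / (k:ℝ)) + 1) = Real.log α + (k:ℝ) := by
      field_simp
    linarith
  have key : (1 - (1 - α) ^ 2) * ((k:ℝ) + 1) ≤ (k:ℝ) / ((k:ℝ) + 1) * (α * L) * (((k:ℝ) + 1) * 2) := by
    have hq : (k:ℝ) / ((k:ℝ) + 1) * (α * L) * (((k:ℝ) + 1) * 2) = 2 * ((k:ℝ) * (α * L)) := by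
      field_simp
    rw [hq]
    nlinarith [mul_le_mul_of_nonneg_left hexp hα0.le, mul_le_mul_of_nonneg_left hcond hα0.le]
  rw [hrpow, ge_iff_le, div_le_iff₀ (by norm_num : (0:ℝ) < 2)]
  calc (1 - (1 - α) ^ 2) = (1 - (1 - α) ^ 2) * ((k:ℝ) + 1) / ((k:ℝ) + 1) := by field_simp
    _ ≤ (k:ℝ) / ((k:ℝ) + 1) * (α * L) * (((k:ℝ) + 1) * 2) / ((k:ℝ) + 1) := by
        gcongr
    _ = (k:ℝ) / ((k:ℝ) + 1) * (α * L) * 2 := by field_simp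
end

section
/- A committee S of size k is c-stable if and only if it is (c/k)-undominated. -/
open Finset

/-- In any election, a committee `S` of size `k` is `c`-stable (every nonempty committee `S'`
is strongly preferred over `S` by strictly fewer than a `c·|S'|/k` fraction of voters) if and
only if it is `(c/k)`-undominated (every candidate `a` is preferred to every member of `S` by
strictly fewer than a `c/k` fraction of voters). A voter strongly prefers `S'` over `S` iff
her favorite candidate in `S'` beats every member of `S`. -/
theorem stmt12 (V C : Type*) [Fintype V] [Fintype C] [Nonempty V]
    (pref : V → C → C → Prop) [∀ v, DecidableRel (pref v)]
    (hlin : ∀ v, IsStrictTotalOrder C (pref v))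
    (k : ℕ) (hk : 1 ≤ k) (S : Finset C) (hS : S.card = k) (c : ℝ) :
    (∀ S' : Finset C, S'.Nonempty →
        ((Finset.univ.filter fun v => ∃ a ∈ S', ∀ b ∈ S, pref v a b).card : ℝ) /
            (Fintype.card V : ℝ) < c * (S'.card : ℝ) / (k : ℝ)) ↔
      (∀ a : C, ((Finset.univ.filter fun v => ∀ b ∈ S, pref v a b).card : ℝ) /
          (Fintype.card V : ℝ) < c / (k : ℝ)) := by
  letI : DecidableEq V := Classical.decEq V
  have hN : (0 : ℝ) < (Fintype.card V : ℝ) := by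
    exact_mod_cast Fintype.card_pos
  constructor
  · intro h a
    have := h {a} (singleton_nonempty a)
    simpa using this
  · intro h S' hS'
    have hsub : (Finset.univ.filter fun v => ∃ a ∈ S', ∀ b ∈ S, pref v a b) ⊆
        S'.biUnion (fun a => Finset.univ.filter fun v => ∀ b ∈ S, pref v a b) := by
      intro v hv
      simp only [mem_filter, mem_univ, true_and] at hv
      obtain ⟨a, ha, hab⟩ := hv
      exact mem_biUnion.mpr ⟨a, ha, by simp only [mem_filter, mem_univ, true_and]; exact hab⟩
    have hcard : ((Finset.univ.filter fun v => ∃ a ∈ S', ∀ b ∈ S, pref v a b).card : ℝ) ≤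
        ∑ a ∈ S', ((Finset.univ.filter fun v => ∀ b ∈ S, pref v a b).card : ℝ) := by
      have := (card_le_card hsub).trans (card_biUnion_le)
      exact_mod_cast this
    have hsum : (∑ a ∈ S', ((Finset.univ.filter fun v => ∀ b ∈ S, pref v a b).card : ℝ) /
        (Fintype.card V : ℝ)) < ∑ _a ∈ S', c / (k : ℝ) :=
      Finset.sum_lt_sum_of_nonempty hS' (fun a _ => h a)
    calc ((Finset.univ.filter fun v => ∃ a ∈ S', ∀ b ∈ S, pref v a b).card : ℝ) /
        (Fintype.card V : ℝ)
        ≤ ∑ a ∈ S', ((Finset.univ.filter fun v => ∀ b ∈ S, pref v a b).card : ℝ) /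
          (Fintype.card V : ℝ) := by
          rw [← Finset.sum_div]
          gcongr
      _ < ∑ _a ∈ S', c / (k : ℝ) := hsum
      _ = c * (S'.card : ℝ) / (k : ℝ) := by
          rw [Finset.sum_const, nsmul_eq_mul]
          ring
end

section
/- Let k ≥ 1 and t > 0 be integers, and consider the election with voter set and candidate set both equal to [k+1] × [t], where voter (p,q) ranks candidates by reverse lexicographic order after shifting coordinates by p mod (k+1) and q mod t. Then for every committee S of k candidates, there exists a candidate a ∉ S preferred over every member of S by at least a (2/(k+1))·(1 - 1/t) fraction of the voters. -/
set_option maxHeartbeats 1000000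

open Finset

lemma aux_pigeon (n : ℕ) (f : Fin (n + 1) → ℕ) (hsum : ∑ c, f c = n) :
    ∃ c, f c = 0 ∧ f (c + 1) ≤ 1 := by
  by_contra h
  push_neg at h
  have h' : ∀ c, f c = 0 → 2 ≤ f (c + 1) := fun c hc => (h c hc)
  set E := univ.filter (fun c => f c = 0) with hE
  have hEne : E.Nonempty := by
    by_contra hne
    rw [Finset.not_nonempty_iff_eq_empty, Finset.filter_eq_empty_iff] at hne
    have h2 : (Finset.univ : Finset (Fin (n+1))).card • 1 ≤ ∑ c, f c := by
      apply Finset.card_nsmul_le_sum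
      intro c _
      have := hne (Finset.mem_univ c)
      omega
    simp [Finset.card_univ] at h2
    omega
  set E' := E.image (· + 1) with hE'
  have hcard : E'.card = E.card :=
    Finset.card_image_of_injective _ (add_left_injective 1)
  have hdisj : Disjoint E E' := by
    rw [Finset.disjoint_left]
    rintro c hcE hcE'
    obtain ⟨e, heE, rfl⟩ := Finset.mem_image.mp hcE'
    have h1 : f (e+1) = 0 := (Finset.mem_filter.mp hcE).2
    have h2 : f e = 0 := (Finset.mem_filter.mp heE).2
    have := h' e h2
    omega
  have hsub : E ∪ E' ⊆ univ := Finset.subset_univ _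
  have hsum2 : ∑ c ∈ univ \ (E ∪ E'), f c + ∑ c ∈ (E ∪ E'), f c = ∑ c, f c :=
    Finset.sum_sdiff hsub
  have h3 : 2 * E.card ≤ ∑ c ∈ (E ∪ E'), f c := by
    have h4 : E'.card • 2 ≤ ∑ c ∈ E', f c := by
      apply Finset.card_nsmul_le_sum
      rintro c hc
      obtain ⟨e, heE, rfl⟩ := Finset.mem_image.mp hc
      exact h' e (Finset.mem_filter.mp heE).2
    have hle : ∑ c ∈ E', f c ≤ ∑ c ∈ E ∪ E', f c :=
      Finset.sum_le_sum_of_subset Finset.subset_union_right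
    simp only [smul_eq_mul, hcard] at h4
    omega
  have h4 : (univ \ (E ∪ E')).card ≤ ∑ c ∈ univ \ (E ∪ E'), f c := by
    have h5 : (univ \ (E ∪ E')).card • 1 ≤ ∑ c ∈ univ \ (E ∪ E'), f c := by
      apply Finset.card_nsmul_le_sum
      intro c hc
      have hcE : c ∉ E := fun h => (Finset.mem_sdiff.mp hc).2 (Finset.mem_union_left _ h)
      have : f c ≠ 0 := fun h0 => hcE (Finset.mem_filter.mpr ⟨Finset.mem_univ _, h0⟩)
      omega
    simpa using h5
  have hcardU : (E ∪ E').card = 2 * E.card := by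
    rw [Finset.card_union_of_disjoint hdisj, hcard]; omega
  have hcards : (univ \ (E ∪ E')).card = (n+1) - 2 * E.card := by
    rw [Finset.card_sdiff_of_subset (Finset.subset_univ _), Finset.card_univ, Fintype.card_fin, hcardU]
  have hUle : 2 * E.card ≤ n + 1 := by
    rw [← hcardU]
    simpa using Finset.card_le_card hsub
  have hEpos : 1 ≤ E.card := Finset.card_pos.mpr hEne
  omega

/-- In the election on `(ℤ/(k+1)) × (ℤ/t)` (realized as `Fin (k+1) × Fin t`, with modular
subtraction) where voter `(p,q)` prefers candidate `(x,y)` over `(x',y')` iff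
`(x-p) < (x'-p)` or `x = x'` and `(y-q) < (y'-q)` (residues compared via representatives),
every committee `S` of `k` candidates is dominated: there is a candidate `a ∉ S` preferred
over every member of `S` by at least a `(2/(k+1))·(1-1/t)` fraction of the `(k+1)·t` voters. -/
theorem stmt14 (k t : ℕ) (hk : 1 ≤ k) (ht : 1 ≤ t) :
    ∀ S : Finset (Fin (k + 1) × Fin t), S.card = k →
      ∃ a : Fin (k + 1) × Fin t, a ∉ S ∧
        (2 / ((k : ℝ) + 1)) * (1 - 1 / (t : ℝ)) ≤
          ((Finset.univ.filter fun v : Fin (k + 1) × Fin t =>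
              ∀ b ∈ S, (a.1 - v.1 < b.1 - v.1) ∨
                (a.1 = b.1 ∧ a.2 - v.2 < b.2 - v.2)).card : ℝ) /
            (((k : ℝ) + 1) * (t : ℝ)) := by
  obtain ⟨m, rfl⟩ : ∃ m, k = m + 1 := ⟨k - 1, by omega⟩
  obtain ⟨u, rfl⟩ : ∃ u, t = u + 1 := ⟨t - 1, by omega⟩
  intro S hS
  obtain ⟨c, hc0, hc1⟩ := aux_pigeon (m + 1)
      (fun c => (S.filter (fun b => b.1 = c)).card)
      ((Finset.card_eq_sum_card_fiberwise (fun b _ => Finset.mem_univ b.1)).symm.trans hS)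
  have hcS : ∀ b ∈ S, b.1 ≠ c := by
    intro b hb hbc
    have hmem : b ∈ S.filter (fun b => b.1 = c) := Finset.mem_filter.mpr ⟨hb, hbc⟩
    rw [Finset.card_eq_zero.mp hc0] at hmem
    exact absurd hmem (Finset.notMem_empty b)
  obtain ⟨z, hz⟩ : ∃ z : Fin (u + 1), ∀ b ∈ S, b.1 = c + 1 → b.2 = z := by
    rcases (S.filter (fun b => b.1 = c + 1)).eq_empty_or_nonempty with h | h
    · refine ⟨0, fun b hb hb1 => ?_⟩
      have hmem : b ∈ S.filter (fun x => x.1 = c + 1) := Finset.mem_filter.mpr ⟨hb, hb1⟩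
      rw [h] at hmem
      exact absurd hmem (Finset.notMem_empty b)
    · obtain ⟨b₀, hb₀⟩ := h
      refine ⟨b₀.2, fun b hb hb1 => ?_⟩
      have heq : b = b₀ := Finset.card_le_one.mp hc1 b (Finset.mem_filter.mpr ⟨hb, hb1⟩) b₀ hb₀
      rw [heq]
  rcases Nat.eq_zero_or_pos u with hu | hu
  · -- t = 1
    subst hu
    refine ⟨(c, 0), fun hmem => hcS _ hmem rfl, ?_⟩
    have h0 : (2:ℝ) / (((m+1:ℕ):ℝ) + 1) * (1 - 1 / ((0+1:ℕ):ℝ)) = 0 := by norm_num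
    rw [h0]
    positivity
  · -- t ≥ 2
    have hne1 : (z - 1 : Fin (u+1)) ≠ z := by
      intro h
      have h1 : (1 : Fin (u+1)) = 0 := sub_eq_self.mp h
      have h2 := congrArg Fin.val h1
      rw [Fin.val_one'] at h2
      simp at h2
      omega
    refine ⟨(c + 1, z - 1), fun hmem => hne1 (hz _ hmem rfl), ?_⟩
    have hcc : c ≠ c + 1 := by
      intro h
      have h1 : (1 : Fin (m+2)) = 0 := left_eq_add.mp h
      have h2 := congrArg Fin.val h1
      rw [Fin.val_one, Fin.val_zero] at h2
      omega
    have hsubset : ({c, c + 1} ×ˢ ({z}ᶜ : Finset (Fin (u+1)))) ⊆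
        Finset.univ.filter (fun v : Fin (m + 1 + 1) × Fin (u + 1) =>
          ∀ b ∈ S, ((c + 1, z - 1).1 - v.1 < b.1 - v.1) ∨
            ((c + 1, z - 1).1 = b.1 ∧ (c + 1, z - 1).2 - v.2 < b.2 - v.2)) := by
      intro v hv
      rw [Finset.mem_product] at hv
      obtain ⟨hp, hq⟩ := hv
      rw [Finset.mem_compl, Finset.mem_singleton] at hq
      rw [Finset.mem_insert, Finset.mem_singleton] at hp
      refine Finset.mem_filter.mpr ⟨Finset.mem_univ _, fun b hb => ?_⟩
      by_cases hb1 : b.1 = c + 1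
      · right
        refine ⟨hb1.symm, ?_⟩
        rw [hz b hb hb1]
        show z - 1 - v.2 < z - v.2
        rw [sub_right_comm]
        have hzq : z - v.2 ≠ 0 := sub_ne_zero.mpr (Ne.symm hq)
        rw [Fin.lt_def, Fin.coe_sub_one, if_neg hzq]
        have hv0 : (z - v.2).val ≠ 0 := fun hh => hzq (Fin.ext hh)
        omega
      · left
        have hbc : b.1 ≠ c := hcS b hb
        show c + 1 - v.1 < b.1 - v.1
        rcases hp with hp | hp
        · rw [hp, add_sub_cancel_left]
          have h0 : b.1 - c ≠ 0 := sub_ne_zero.mpr hbc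
          have h1 : b.1 - c ≠ 1 := by
            intro hh
            exact hb1 ((sub_eq_iff_eq_add.mp hh).trans (add_comm 1 c))
          rw [Fin.lt_def]
          have hv0 : (b.1 - c).val ≠ 0 := fun hh => h0 (Fin.ext hh)
          have hv1 : (b.1 - c).val ≠ 1 := by
            intro hh
            exact h1 (Fin.ext (by rw [hh, Fin.val_one]))
          have hone : (1 : Fin (m+2)).val = 1 := Fin.val_one m
          omega
        · rw [hp, sub_self, Fin.pos_iff_ne_zero]
          exact sub_ne_zero.mpr hb1
    have hcount : 2 * u ≤ (Finset.univ.filter (fun v : Fin (m + 1 + 1) × Fin (u + 1) =>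
          ∀ b ∈ S, ((c + 1, z - 1).1 - v.1 < b.1 - v.1) ∨
            ((c + 1, z - 1).1 = b.1 ∧ (c + 1, z - 1).2 - v.2 < b.2 - v.2))).card := by
      have h1 : ({c, c + 1} ×ˢ ({z}ᶜ : Finset (Fin (u+1)))).card = 2 * u := by
        rw [Finset.card_product, Finset.card_insert_of_notMem (by simpa using hcc),
          Finset.card_singleton, Finset.card_compl, Finset.card_singleton, Fintype.card_fin]
        omega
      rw [← h1]
      exact Finset.card_le_card hsubset
    have hcard' : (2 * u : ℝ) ≤ ((Finset.univ.filter (fun v : Fin (m + 1 + 1) × Fin (u + 1) =>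
          ∀ b ∈ S, ((c + 1, z - 1).1 - v.1 < b.1 - v.1) ∨
            ((c + 1, z - 1).1 = b.1 ∧ (c + 1, z - 1).2 - v.2 < b.2 - v.2))).card : ℝ) := by
      exact_mod_cast hcount
    have hu1 : (1:ℝ) ≤ (u:ℝ) := by exact_mod_cast hu
    have heq : (2:ℝ) / (((m+1:ℕ):ℝ) + 1) * (1 - 1 / ((u+1:ℕ):ℝ)) =
        (2*u) / ((((m+1:ℕ):ℝ) + 1) * ((u+1:ℕ):ℝ)) := by
      push_cast
      field_simp
      try ring
    rw [heq]
    gcongr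
end

section
/- In any election, there exists a distribution Δ over committees of size at most k such that for every candidate a, the expected (over S ~ Δ) fraction of voters preferring a over S is strictly less than 1/(k+1). -/
/-!
View the statement as a zero-sum game: one player picks a committee of size at most `k`, the
other a candidate `a`, with payoff the share of voters preferring `a` to the committee. By von
Neumann's minimax theorem (Sion's theorem on two standard simplices) it suffices to answer every
mixed strategy `p` over candidates by one committee of payoff `< 1/(k+1)` against `p`.

For that, draw `k + 1` candidates i.i.d. from `p`. For a fixed voter at most one draw is strictly
preferred to all the others, and none is when all draws coincide, an event of positive
probability; by symmetry the first draw is the strict favourite with probability `< 1/(k+1)`.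
Averaging over voters, the committee formed by the other `k` draws does this well in
expectation, hence some such committee does.
-/

open Finset Matrix

namespace Matrix

variable {ι κ : Type*} [Fintype ι] [Fintype κ]

theorem exists_isSaddlePointOn_stdSimplex [Nonempty ι] [Nonempty κ] (M : Matrix ι κ ℝ) :
    ∃ w ∈ stdSimplex ℝ ι, ∃ p ∈ stdSimplex ℝ κ,
      IsSaddlePointOn (stdSimplex ℝ ι) (stdSimplex ℝ κ) (fun w p ↦ w ⬝ᵥ M *ᵥ p) w p := by
  classical
  refine Sion.exists_isSaddlePointOn ⟨_, single_mem_stdSimplex ℝ (Classical.arbitrary ι)⟩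
    (convex_stdSimplex ℝ ι) (isCompact_stdSimplex ℝ ι) (fun p _ ↦ ?_) (fun p _ ↦ ?_)
    (convex_stdSimplex ℝ κ) ⟨_, single_mem_stdSimplex ℝ (Classical.arbitrary κ)⟩
    (isCompact_stdSimplex ℝ κ) (fun w _ ↦ ?_) (fun w _ ↦ ?_)
  · exact ((dotProductBilin ℝ ℝ).flip (M *ᵥ p)).continuous_of_finiteDimensional
      |>.lowerSemicontinuous.lowerSemicontinuousOn _
  · exact ((dotProductBilin ℝ ℝ).flip (M *ᵥ p)).convexOn (convex_stdSimplex ℝ ι) |>.quasiconvexOn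
  · exact ((dotProductBilin ℝ ℝ) w ∘ₗ mulVecLin M).continuous_of_finiteDimensional
      |>.upperSemicontinuous.upperSemicontinuousOn _
  · exact ((dotProductBilin ℝ ℝ) w ∘ₗ mulVecLin M).concaveOn (convex_stdSimplex ℝ κ)
      |>.quasiconcaveOn

theorem exists_mem_stdSimplex_forall_sum_mul_lt [Nonempty ι] (M : Matrix ι κ ℝ) {v : ℝ}
    (h : ∀ p ∈ stdSimplex ℝ κ, ∃ i, ∑ a, M i a * p a < v) :
    ∃ w ∈ stdSimplex ℝ ι, ∀ a, ∑ i, w i * M i a < v := by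
  classical
  rcases isEmpty_or_nonempty κ with hκ | hκ
  · exact ⟨_, single_mem_stdSimplex ℝ (Classical.arbitrary ι), isEmptyElim⟩
  obtain ⟨w, hw, p, hp, hsaddle⟩ := exists_isSaddlePointOn_stdSimplex M
  obtain ⟨i, hi⟩ := h p hp
  refine ⟨w, hw, fun a ↦ ?_⟩
  calc ∑ i, w i * M i a = w ⬝ᵥ M *ᵥ Pi.single a 1 := by rw [mulVec_single_one]; rfl
    _ ≤ Pi.single i 1 ⬝ᵥ M *ᵥ p :=
        hsaddle _ (single_mem_stdSimplex ℝ i) _ (single_mem_stdSimplex ℝ a)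
    _ = ∑ a, M i a * p a := single_one_dotProduct i _
    _ < v := hi

theorem exists_mem_stdSimplex_forall_sum_mul_lt_of_support (P : ι → Prop) [DecidablePred P]
    (hP : ∃ i, P i) (M : Matrix ι κ ℝ) {v : ℝ}
    (h : ∀ p ∈ stdSimplex ℝ κ, ∃ i, P i ∧ ∑ a, M i a * p a < v) :
    ∃ w ∈ stdSimplex ℝ ι, (∀ i, w i ≠ 0 → P i) ∧ ∀ a, ∑ i, w i * M i a < v := by
  have : Nonempty (Subtype P) := nonempty_subtype.2 hP
  obtain ⟨w, hw, hlt⟩ := exists_mem_stdSimplex_forall_sum_mul_lt (M.submatrix Subtype.val id)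
    fun p hp ↦ by
      obtain ⟨i, hPi, hi⟩ := h p hp
      exact ⟨⟨i, hPi⟩, hi⟩
  have hsum (g : ι → ℝ) : ∑ i, (if h : P i then w ⟨i, h⟩ else 0) * g i = ∑ j, w j * g j := by
    rw [← Fintype.sum_subtype_add_sum_subtype P, add_eq_left.2,
      Fintype.sum_congr _ _ fun j ↦ by rw [dif_pos j.2]]
    exact Fintype.sum_eq_zero _ fun i ↦ by rw [dif_neg i.2, zero_mul]
  refine ⟨fun i ↦ if h : P i then w ⟨i, h⟩ else 0, ⟨fun i ↦ ?_, ?_⟩, fun i hi ↦ ?_, fun a ↦ ?_⟩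
  · exact dite_nonneg (fun _ ↦ hw.1 _) fun _ ↦ le_rfl
  · simpa [hw.2] using hsum 1
  · by_contra hPi
    exact hi (dif_neg hPi)
  · rw [hsum]
    exact hlt a

end Matrix

section StrictMax

variable {α ι κ : Type*} (r : α → α → Prop)

def IsStrictMaxAt (u : ι → α) (i : ι) : Prop := ∀ j ≠ i, r (u i) (u j)

instance [Fintype ι] [DecidableEq ι] [DecidableRel r] (u : ι → α) (i : ι) :
    Decidable (IsStrictMaxAt r u i) :=
  inferInstanceAs (Decidable (∀ j ≠ i, r (u i) (u j)))

variable {r}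

theorem isStrictMaxAt_comp_equiv (u : ι → α) (σ : κ ≃ ι) (j : κ) :
    IsStrictMaxAt r (u ∘ σ) j ↔ IsStrictMaxAt r u (σ j) := by
  simp only [IsStrictMaxAt, Function.comp_apply]
  rw [σ.forall_congr_left]
  simp [Equiv.symm_apply_eq]

theorem IsStrictMaxAt.eq [IsStrictOrder α r] {u : ι → α} {i j : ι}
    (hi : IsStrictMaxAt r u i) (hj : IsStrictMaxAt r u j) : i = j := by
  by_contra hij
  exact irrefl _ (_root_.trans (hi j (Ne.symm hij)) (hj i hij))

theorem not_isStrictMaxAt_const [Std.Irrefl r] [Nontrivial ι] (c : α) (i : ι) :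
    ¬IsStrictMaxAt r (fun _ ↦ c) i := fun h ↦
  have ⟨j, hj⟩ := exists_ne i
  irrefl c (h j hj)

theorem isStrictMaxAt_cons_zero {k : ℕ} (a : α) (t : Fin k → α) :
    IsStrictMaxAt r (Fin.cons a t : Fin (k + 1) → α) 0 ↔ ∀ j, r a (t j) := by
  simp [IsStrictMaxAt, Fin.forall_fin_succ]

end StrictMax

section Sampling

variable {α ι : Type*} [Fintype α] [Fintype ι] [DecidableEq ι] {p : α → ℝ}

theorem prod_mem_stdSimplex (hp : p ∈ stdSimplex ℝ α) :
    (fun u : ι → α ↦ ∏ j, p (u j)) ∈ stdSimplex ℝ (ι → α) := by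
  refine ⟨fun u ↦ prod_nonneg fun j _ ↦ hp.1 _, ?_⟩
  rw [← Fintype.prod_sum fun (_ : ι) a ↦ p a, hp.2, prod_const_one]

theorem sum_prod_mul_comp_perm (σ : Equiv.Perm ι) (F : (ι → α) → ℝ) :
    ∑ u : ι → α, (∏ j, p (u j)) * F (u ∘ σ) = ∑ u : ι → α, (∏ j, p (u j)) * F u := by
  rw [← (σ.arrowCongr (Equiv.refl α)).sum_comp]
  refine Fintype.sum_congr _ _ fun u ↦ ?_
  congr 1
  · exact σ.symm.prod_comp fun j ↦ p (u j)
  · congr 1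
    ext j
    simp

variable {r : α → α → Prop} [DecidableRel r]

theorem sum_prod_mul_isStrictMaxAt_eq (i i' : ι) :
    ∑ u : ι → α, (∏ j, p (u j)) * (if IsStrictMaxAt r u i' then 1 else 0) =
      ∑ u : ι → α, (∏ j, p (u j)) * (if IsStrictMaxAt r u i then 1 else 0) := by
  rw [← sum_prod_mul_comp_perm (Equiv.swap i' i)]
  simp only [isStrictMaxAt_comp_equiv, Equiv.swap_apply_left]

theorem card_mul_sum_prod_mul_isStrictMaxAt_lt [IsStrictOrder α r] [Nontrivial ι]
    (hp : p ∈ stdSimplex ℝ α) (i : ι) :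
    (Fintype.card ι : ℝ) * ∑ u : ι → α, (∏ j, p (u j)) * (if IsStrictMaxAt r u i then 1 else 0)
      < 1 := by
  have hW := prod_mem_stdSimplex (ι := ι) hp
  have hcount (u : ι → α) : ∑ i', (if IsStrictMaxAt r u i' then 1 else 0 : ℝ) ≤ 1 := by
    rw [sum_boole, Nat.cast_le_one, card_le_one]
    intro i₁ h₁ i₂ h₂
    exact (mem_filter.1 h₁).2.eq (mem_filter.1 h₂).2
  obtain ⟨c, -, hc⟩ := exists_ne_zero_of_sum_ne_zero (hp.2 ▸ one_ne_zero : ∑ a, p a ≠ 0)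
  calc (Fintype.card ι : ℝ) * ∑ u : ι → α, (∏ j, p (u j)) * (if IsStrictMaxAt r u i then 1 else 0)
      = ∑ i', ∑ u : ι → α, (∏ j, p (u j)) * (if IsStrictMaxAt r u i' then 1 else 0) := by
        simp only [sum_prod_mul_isStrictMaxAt_eq i, sum_const, card_univ, nsmul_eq_mul]
    _ = ∑ u : ι → α, (∏ j, p (u j)) * ∑ i', (if IsStrictMaxAt r u i' then 1 else 0) := by
        simp only [mul_sum]
        exact sum_comm
    _ < ∑ u : ι → α, ∏ j, p (u j) := by
        refine sum_lt_sum (fun u _ ↦ mul_le_of_le_one_right (hW.1 u) (hcount u))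
          ⟨fun _ ↦ c, mem_univ _, ?_⟩
        simp [not_isStrictMaxAt_const, pow_pos ((hp.1 c).lt_of_ne' hc)]
    _ = 1 := hW.2

theorem sum_prod_mul_isStrictMaxAt_zero {k : ℕ} :
    ∑ u : Fin (k + 1) → α, (∏ j, p (u j)) * (if IsStrictMaxAt r u 0 then 1 else 0) =
      ∑ t : Fin k → α, (∏ j, p (t j)) * ∑ a, p a * (if ∀ j, r a (t j) then 1 else 0) := by
  rw [← (Fin.consEquiv fun _ ↦ α).sum_comp, Fintype.sum_prod_type, sum_comm]
  refine Fintype.sum_congr _ _ fun t ↦ ?_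
  rw [mul_sum]
  refine Fintype.sum_congr _ _ fun a ↦ ?_
  rw [show (Fin.consEquiv fun _ ↦ α) (a, t) = Fin.cons a t from rfl]
  simp only [Fin.prod_univ_succ, Fin.cons_zero, Fin.cons_succ, isStrictMaxAt_cons_zero]
  ring

theorem sum_prod_mul_sum_lt [IsStrictOrder α r] {k : ℕ} (hk : 1 ≤ k) (hp : p ∈ stdSimplex ℝ α) :
    ∑ t : Fin k → α, (∏ j, p (t j)) * ∑ a, p a * (if ∀ j, r a (t j) then 1 else 0) <
      1 / ((k : ℝ) + 1) := by
  have : Nontrivial (Fin (k + 1)) := Fin.nontrivial_iff_two_le.2 (by omega)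
  rw [← sum_prod_mul_isStrictMaxAt_zero, lt_div_iff₀' (by positivity)]
  simpa using card_mul_sum_prod_mul_isStrictMaxAt_lt (ι := Fin (k + 1)) (r := r) hp 0

end Sampling

theorem exists_lt_of_sum_mul_lt {ι : Type*} [Fintype ι] {w g : ι → ℝ} {c : ℝ}
    (hw : w ∈ stdSimplex ℝ ι) (h : ∑ i, w i * g i < c) : ∃ i, g i < c := by
  rw [← mul_one c, ← hw.2, mul_sum] at h
  obtain ⟨i, -, hi⟩ := exists_lt_of_sum_lt (h.trans_eq (sum_congr rfl fun i _ ↦ mul_comm _ _))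
  exact ⟨i, lt_of_mul_lt_mul_left hi (hw.1 i)⟩

section Election

variable {V C : Type*} [Fintype V] [Fintype C] [DecidableEq C] (pref : V → C → C → Prop)
  [∀ v, DecidableRel (pref v)]

noncomputable def prefShare (S : Finset C) (a : C) : ℝ :=
  #{v | ∀ b ∈ S, pref v a b} / Fintype.card V

theorem sum_prefShare_image_mul {k : ℕ} (t : Fin k → C) (p : C → ℝ) :
    ∑ a, prefShare pref (univ.image t) a * p a =
      (∑ v, ∑ a, p a * if ∀ j, pref v a (t j) then 1 else 0) / Fintype.card V := by
  simp only [prefShare, forall_mem_image, mem_univ, true_implies, ← sum_boole, sum_div, sum_mul]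
  rw [sum_comm]
  exact sum_congr rfl fun v _ ↦ sum_congr rfl fun a _ ↦ by ring

variable {pref}

theorem exists_card_le_sum_prefShare_mul_lt [Nonempty V]
    (hpref : ∀ v, IsStrictOrder C (pref v)) {k : ℕ} (hk : 1 ≤ k) {p : C → ℝ}
    (hp : p ∈ stdSimplex ℝ C) :
    ∃ S : Finset C, S.card ≤ k ∧ ∑ a, prefShare pref S a * p a < 1 / ((k : ℝ) + 1) := by
  have hW := prod_mem_stdSimplex (ι := Fin k) hp
  have hV : (0 : ℝ) < Fintype.card V := Nat.cast_pos.2 Fintype.card_pos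
  have havg : ∑ t : Fin k → C, (∏ j, p (t j)) * ∑ a, prefShare pref (univ.image t) a * p a <
      1 / ((k : ℝ) + 1) :=
    calc _ = (∑ v, ∑ t : Fin k → C, (∏ j, p (t j)) *
            ∑ a, p a * if ∀ j, pref v a (t j) then 1 else 0) / Fintype.card V := by
          simp only [sum_prefShare_image_mul, mul_div_assoc', sum_div, mul_sum]
          exact sum_comm
      _ < (∑ _v : V, 1 / ((k : ℝ) + 1)) / Fintype.card V := by
          refine div_lt_div_of_pos_right (sum_lt_sum_of_nonempty univ_nonempty fun v _ ↦ ?_) hV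
          have := hpref v
          exact sum_prod_mul_sum_lt hk hp
      _ = 1 / ((k : ℝ) + 1) := by
          rw [sum_const, card_univ, nsmul_eq_mul, mul_div_cancel_left₀ _ hV.ne']
  obtain ⟨t, ht⟩ := exists_lt_of_sum_mul_lt hW havg
  exact ⟨univ.image t, card_image_le.trans_eq (card_fin k), ht⟩

end Election

/-- In any election there exists a probability distribution `Δ` over committees of size at
most `k` such that for every candidate `a`, the expected (over `S ~ Δ`) fraction of voters
preferring `a` over every member of `S` is strictly less than `1/(k+1)`. -/
theorem stmt17 (V C : Type*) [Fintype V] [Fintype C] [Nonempty V] [DecidableEq C]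
    (pref : V → C → C → Prop) [∀ v, DecidableRel (pref v)]
    (hlin : ∀ v, IsStrictTotalOrder C (pref v)) (k : ℕ) (hk : 1 ≤ k) :
    ∃ Δ : Finset C → ℝ, (∀ S, 0 ≤ Δ S) ∧ (∀ S, Δ S ≠ 0 → S.card ≤ k) ∧
      (∑ S : Finset C, Δ S) = 1 ∧
      ∀ a : C,
        (∑ S : Finset C, Δ S *
            (((Finset.univ.filter fun v => ∀ b ∈ S, pref v a b).card : ℝ) /
              (Fintype.card V : ℝ))) < 1 / ((k : ℝ) + 1) := by
  obtain ⟨Δ, hΔ, hsupp, hlt⟩ := Matrix.exists_mem_stdSimplex_forall_sum_mul_lt_of_support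
    (fun S : Finset C ↦ S.card ≤ k) ⟨∅, by simp⟩ (prefShare pref)
    fun p hp ↦ exists_card_le_sum_prefShare_mul_lt (fun v ↦ (hlin v).toIsStrictOrder) hk hp
  exact ⟨Δ, hΔ.1, hsupp, hΔ.2, hlt⟩
end

section
/- Let Δ be a probability distribution over a finite set of committees and, for voter v, let rank_v(S) = Pr_{S'~Δ}[S ⪰_v S'] where ⪰_v is a linear order over committees. Suppose for each committee S, U_S is the set of the αn voters with smallest rank_v(S). If g : [0,1] → ℝ_{≥0} is non-decreasing, non-constant, and continuous, then E_{S~Δ}[(1/n)·Σ_{v∈U_S} g(rank_v(S))] ≥ ∫_0^α g(x) dx. -/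
open Finset MeasureTheory intervalIntegral

/-- The rank of committee `S` for voter `v`: the total `Δ`-probability of committees `S'`
weakly below `S` in `v`'s linear order (i.e., such that `v` does not strictly prefer `S'`
to `S`). -/
noncomputable def committeeRank {V 𝒮 : Type*} [Fintype 𝒮]
    (Δ : 𝒮 → ℝ) (pref : V → 𝒮 → 𝒮 → Prop) [∀ v, DecidableRel (pref v)]
    (v : V) (S : 𝒮) : ℝ :=
  ∑ S' ∈ Finset.univ.filter (fun S' => ¬ pref v S' S), Δ S'

/-!
For each voter `v`, the rank `rank_v(S)` is a "CDF evaluated at its own argument", so under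
`S ~ Δ` it stochastically dominates the uniform law: `Pr[rank_v(S) ≤ t] ≤ t`. Summing over
voters, the measure `μ = ∑_S Δ(S) ∑_{v ∈ U_S} δ_{rank_v(S)}` has total mass `a` and
`μ [0, t] ≤ n t`. Among all such measures, `∫ g dμ` for monotone `g` is smallest when the mass
is pushed as far left as allowed, i.e. for `n` times Lebesgue measure on `[0, a/n]`; for a
finitely supported `μ` this follows by induction, removing its rightmost atom.
-/

theorem MonotoneOn.mul_integral_le_sum_mul {ι : Type*} {g : ℝ → ℝ}
    (hg : MonotoneOn g (Set.Icc 0 1)) {n : ℝ} (hn : 0 < n) (s : Finset ι) {x w : ι → ℝ}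
    (hx : ∀ i ∈ s, x i ∈ Set.Icc (0 : ℝ) 1) (hw : ∀ i ∈ s, 0 ≤ w i)
    (hcdf : ∀ t, 0 ≤ t → ∑ i ∈ s with x i ≤ t, w i ≤ n * t) :
    n * ∫ y in (0 : ℝ)..(∑ i ∈ s, w i) / n, g y ≤ ∑ i ∈ s, w i * g (x i) := by
  classical
  induction s using Finset.induction_on_max_value x with
  | empty => simp
  | insert i s hi hmax ih =>
    simp only [mem_insert, forall_eq_or_imp] at hx hw
    set c := (∑ j ∈ s, w j) / n
    set d := (w i + ∑ j ∈ s, w j) / n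
    have hc : 0 ≤ c := div_nonneg (sum_nonneg hw.2) hn.le
    have hcd : c ≤ d := div_le_div_of_nonneg_right (by linarith [hw.1]) hn.le
    have hdx : d ≤ x i := by
      have := hcdf (x i) hx.1.1
      rw [filter_true_of_mem (by simpa using hmax), sum_insert hi] at this
      rwa [div_le_iff₀' hn]
    have hIH : n * ∫ y in (0 : ℝ)..c, g y ≤ ∑ j ∈ s, w j * g (x j) := by
      refine ih hx.2 hw.2 fun t ht => (sum_le_sum_of_subset_of_nonneg ?_ ?_).trans (hcdf t ht)
      · exact filter_subset_filter _ (subset_insert i s)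
      · exact fun j hj _ => (mem_insert.mp (mem_filter.mp hj).1).elim (· ▸ hw.1) (hw.2 j)
    have hint : ∀ {u v}, u ∈ Set.Icc (0 : ℝ) 1 → v ∈ Set.Icc (0 : ℝ) 1 →
        IntervalIntegrable g volume u v := fun hu hv =>
      (hg.mono (Set.uIcc_subset_Icc hu hv)).intervalIntegrable
    have hcI : c ∈ Set.Icc (0 : ℝ) 1 := ⟨hc, by linarith [hx.1.2]⟩
    have hdI : d ∈ Set.Icc (0 : ℝ) 1 := ⟨hc.trans hcd, by linarith [hx.1.2]⟩
    have hlast : ∫ y in c..d, g y ≤ (d - c) * g (x i) := by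
      calc ∫ y in c..d, g y ≤ ∫ _ in c..d, g (x i) :=
            integral_mono_on hcd (hint hcI hdI) intervalIntegrable_const fun y hy =>
              hg ⟨hc.trans hy.1, hy.2.trans hdI.2⟩ hx.1 (hy.2.trans hdx)
        _ = (d - c) * g (x i) := by simp
    have hdc : n * (d - c) = w i := by
      rw [mul_sub, mul_div_cancel₀ _ hn.ne', mul_div_cancel₀ _ hn.ne']; ring
    rw [sum_insert hi, sum_insert hi,
      ← integral_add_adjacent_intervals (hint ⟨le_rfl, zero_le_one⟩ hcI) (hint hcI hdI)]
    have hstep := mul_le_mul_of_nonneg_left hlast hn.le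
    rw [← mul_assoc, hdc] at hstep
    rw [mul_add]
    linarith

section CommitteeRank

variable {V 𝒮 : Type*} [Fintype 𝒮] {Δ : 𝒮 → ℝ} {pref : V → 𝒮 → 𝒮 → Prop}
  [∀ v, DecidableRel (pref v)]

theorem committeeRank_mem_Icc (hΔ0 : ∀ S, 0 ≤ Δ S) (hΔ1 : ∑ S, Δ S = 1) (v : V) (S : 𝒮) :
    committeeRank Δ pref v S ∈ Set.Icc (0 : ℝ) 1 :=
  ⟨sum_nonneg fun S' _ => hΔ0 S',
    hΔ1 ▸ sum_le_sum_of_subset_of_nonneg (filter_subset _ _) fun S' _ _ => hΔ0 S'⟩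

theorem sum_filter_committeeRank_le (hΔ0 : ∀ S, 0 ≤ Δ S) (v : V) [IsStrictOrder 𝒮 (pref v)]
    {t : ℝ} (ht : 0 ≤ t) : ∑ S with committeeRank Δ pref v S ≤ t, Δ S ≤ t := by
  set A : Finset 𝒮 := {S | committeeRank Δ pref v S ≤ t}
  obtain hA | hA := A.eq_empty_or_nonempty
  · simpa [hA] using ht
  -- every committee of `A` lies weakly below a `pref v`-minimal one `m`, so `Δ(A) ≤ rank_v(m)`
  obtain ⟨m, hmA, hmin⟩ :=
    (Finite.wellFounded_of_trans_of_irrefl (pref v)).has_min (A : Set 𝒮) hA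
  calc ∑ S ∈ A, Δ S ≤ committeeRank Δ pref v m :=
        sum_le_sum_of_subset_of_nonneg (fun S hS => mem_filter.mpr ⟨mem_univ S, hmin S hS⟩)
          fun S _ _ => hΔ0 S
    _ ≤ t := (mem_filter.mp hmA).2

variable [Fintype V]

theorem sum_sigma_filter_committeeRank_le (hΔ0 : ∀ S, 0 ≤ Δ S)
    [∀ v, IsStrictOrder 𝒮 (pref v)] (U : 𝒮 → Finset V) {t : ℝ} (ht : 0 ≤ t) :
    ∑ p ∈ univ.sigma U with committeeRank Δ pref p.2 p.1 ≤ t, Δ p.1 ≤ Fintype.card V * t := by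
  rw [sum_filter, sum_sigma]
  calc ∑ S, ∑ v ∈ U S, (if committeeRank Δ pref v S ≤ t then Δ S else 0)
      ≤ ∑ S, ∑ v, (if committeeRank Δ pref v S ≤ t then Δ S else 0) :=
        sum_le_sum fun S _ =>
          sum_le_sum_of_subset_of_nonneg (subset_univ _) fun v _ _ => ite_nonneg (hΔ0 S) le_rfl
    _ = ∑ v, ∑ S with committeeRank Δ pref v S ≤ t, Δ S := by
        rw [sum_comm]; simp only [sum_filter]
    _ ≤ ∑ _v : V, t := sum_le_sum fun v _ => sum_filter_committeeRank_le hΔ0 v ht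
    _ = Fintype.card V * t := by simp

end CommitteeRank

theorem stmt18_general (V 𝒮 : Type*) [Fintype V] [Fintype 𝒮] [Nonempty V]
    (Δ : 𝒮 → ℝ) (hΔ0 : ∀ S, 0 ≤ Δ S) (hΔ1 : (∑ S : 𝒮, Δ S) = 1)
    (pref : V → 𝒮 → 𝒮 → Prop) [∀ v, DecidableRel (pref v)]
    (hlin : ∀ v, IsStrictTotalOrder 𝒮 (pref v))
    (a : ℕ)
    (U : 𝒮 → Finset V) (hUcard : ∀ S, (U S).card = a)
    (g : ℝ → ℝ) (hmono : MonotoneOn g (Set.Icc 0 1)) :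
    (∫ x in (0 : ℝ)..((a : ℝ) / (Fintype.card V : ℝ)), g x) ≤
      ∑ S : 𝒮, Δ S *
        ((∑ v ∈ U S, g (committeeRank Δ pref v S)) / (Fintype.card V : ℝ)) := by
  have hn : (0 : ℝ) < Fintype.card V := by exact_mod_cast Fintype.card_pos
  have hmass : ∑ p ∈ univ.sigma U, Δ p.1 = a := by
    simp [sum_sigma, hUcard, ← mul_sum, hΔ1]
  have key := hmono.mul_integral_le_sum_mul hn (univ.sigma U)
    (x := fun p => committeeRank Δ pref p.2 p.1) (w := fun p => Δ p.1)
    (fun p _ => committeeRank_mem_Icc hΔ0 hΔ1 _ _) (fun p _ => hΔ0 p.1)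
    (fun t ht => sum_sigma_filter_committeeRank_le hΔ0 U ht)
  rw [hmass, sum_sigma] at key
  simp only [← mul_sum] at key
  simp only [← mul_div_assoc, ← sum_div]
  rw [le_div_iff₀ hn, mul_comm]
  exact key

/-- Let `Δ` be a probability distribution over a finite set of committees, each voter `v`
having a strict linear order over committees, `rank_v(S) = Pr_{S'~Δ}[S ⪰_v S']`, and for
each committee `S` let `U_S` be a set of `αn` voters with the smallest values of
`rank_v(S)`. If `g : [0,1] → ℝ≥0` is non-decreasing, non-constant, and continuous, then
`E_{S~Δ}[(1/n)·Σ_{v∈U_S} g(rank_v(S))] ≥ ∫_0^α g(x) dx`, where `α = a/n`. -/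
theorem stmt18 (V 𝒮 : Type*) [Fintype V] [Fintype 𝒮] [Nonempty V]
    (Δ : 𝒮 → ℝ) (hΔ0 : ∀ S, 0 ≤ Δ S) (hΔ1 : (∑ S : 𝒮, Δ S) = 1)
    (pref : V → 𝒮 → 𝒮 → Prop) [∀ v, DecidableRel (pref v)]
    (hlin : ∀ v, IsStrictTotalOrder 𝒮 (pref v))
    (a : ℕ) (ha0 : 0 < a) (han : a ≤ Fintype.card V)
    (U : 𝒮 → Finset V) (hUcard : ∀ S, (U S).card = a)
    (hUmin : ∀ S, ∀ v ∈ U S, ∀ u : V, u ∉ U S →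
      committeeRank Δ pref v S ≤ committeeRank Δ pref u S)
    (g : ℝ → ℝ) (hmono : MonotoneOn g (Set.Icc 0 1))
    (hcont : ContinuousOn g (Set.Icc 0 1))
    (hnonneg : ∀ x ∈ Set.Icc (0 : ℝ) 1, 0 ≤ g x)
    (hnonconst : ∃ x ∈ Set.Icc (0 : ℝ) 1, ∃ y ∈ Set.Icc (0 : ℝ) 1, g x ≠ g y) :
    (∫ x in (0 : ℝ)..((a : ℝ) / (Fintype.card V : ℝ)), g x) ≤
      ∑ S : 𝒮, Δ S *
        ((∑ v ∈ U S, g (committeeRank Δ pref v S)) / (Fintype.card V : ℝ)) :=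
  stmt18_general V 𝒮 Δ hΔ0 hΔ1 pref hlin a U hUcard g hmono
end

section
/- For each integer k ≥ 1, let α(k) be the infimum over all α such that every election admits an α-undominated committee of size k. Then for all integers 1 ≤ k' < k, α(k) ≤ (k'/k)²·α(k') + 4·ln(k/k')/(k - k'). -/
/-!
Write `pref v a b` for "voter `v` ranks `a` above `b`". For a lottery `l` on the candidates and
`t > 0`, call `l` stable if every candidate `a` satisfies
`∑ v, max 0 (2t - l{b : v ranks b at least as high as a}) ≤ 2t² n`. Stable lotteries exist by
Sion's minimax theorem: against a mixed challenger `ξ`, the lottery `ξ` itself has average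
`∑ₐ ξ a · max 0 (c - ξ{b ⪰ a}) ≤ c²/2` for every voter, a discrete form of `∫₀^c (c - x) dx`.

Draw `K = k - k'` candidates from `l` (derandomized by conditional expectations). A voter's
top set `{b : l{c ≻ b} < t}` has mass at least `min t 1`, so at most `e^{-tK} n` voters miss
it entirely; these get a committee of size `k'` recursively. A voter whose top set is hit and
who still ranks `a` above the whole committee puts `l`-mass less than `t` weakly above `a`, and
stability bounds the number of such voters by `2tn`. With `t = 2 ln(k/k')/(k - k')` one gets
`e^{-tK} = (k'/k)²` and `2t = 4 ln(k/k')/(k - k')`.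
-/

open Finset
open scoped Classical

/-- `hasUndom k α` says that every election (finitely many voters, each with a strict
linear order over a finite candidate set) admits a committee of size (at most) `k` that is
`α`-undominated: every candidate is preferred over all of the committee by strictly fewer
than an `α` fraction of the voters. -/
def hasUndom (k : ℕ) (α : ℝ) : Prop :=
  ∀ (n m : ℕ) (pref : Fin n → Fin m → Fin m → Prop),
    (∀ v, IsStrictTotalOrder (Fin m) (pref v)) → 0 < n →
    ∃ S : Finset (Fin m), S.card ≤ k ∧
      ∀ a : Fin m,
        ((Finset.univ.filter fun v => ∀ b ∈ S, pref v a b).card : ℝ) / (n : ℝ) < α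

theorem ConvexOn.sum {ι E : Type*} [AddCommMonoid E] [Module ℝ E] {s : Set E}
    (hs : Convex ℝ s) {t : Finset ι} {f : ι → E → ℝ} (hf : ∀ i ∈ t, ConvexOn ℝ s (f i)) :
    ConvexOn ℝ s fun x => ∑ i ∈ t, f i x := by
  induction t using Finset.induction_on with
  | empty => simpa using convexOn_const 0 hs
  | insert i t hi ih =>
    simp_rw [sum_insert hi]
    exact (hf i (mem_insert_self i t)).add (ih fun j hj => hf j (mem_insert_of_mem hj))

theorem concaveOn_sum_mul {C : Type*} [Fintype C] (w : C → ℝ) {s : Set (C → ℝ)}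
    (hs : Convex ℝ s) : ConcaveOn ℝ s fun l : C → ℝ => ∑ b, w b * l b := by
  have hL : ⇑(∑ b, w b • LinearMap.proj (R := ℝ) (φ := fun _ : C => ℝ) b) =
      fun l => ∑ b, w b * l b := by
    ext l; simp
  exact hL ▸ LinearMap.concaveOn _ hs

theorem convexOn_max_zero_sub_sum {C : Type*} [Fintype C] (s : Finset C) (c : ℝ) :
    ConvexOn ℝ Set.univ fun l : C → ℝ => max 0 (c - ∑ b ∈ s, l b) := by
  have hL : ⇑(∑ b ∈ s, LinearMap.proj (R := ℝ) (φ := fun _ : C => ℝ) b) =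
      fun l => ∑ b ∈ s, l b := by
    ext l; simp
  exact (convexOn_const 0 convex_univ).sup
    ((convexOn_const c convex_univ).sub (hL ▸ LinearMap.concaveOn _ convex_univ))

theorem exists_le_sum_mul {ι : Type*} [Fintype ι] {w : ι → ℝ} (hw : w ∈ stdSimplex ℝ ι)
    (g : ι → ℝ) : ∃ i, g i ≤ ∑ j, w j * g j := by
  by_contra! h
  obtain ⟨i, -, hi⟩ := exists_lt_of_sum_lt (s := univ) (f := 0) (g := w) (by simp [hw.2])
  have := sum_lt_sum (fun j _ => mul_le_mul_of_nonneg_left (h j).le (hw.1 j))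
    ⟨i, mem_univ i, mul_lt_mul_of_pos_left (h i) hi⟩
  rw [← sum_mul, hw.2, one_mul] at this
  exact lt_irrefl _ this

section StrictTotalOrder

variable {C : Type*} (r : C → C → Prop) [IsStrictTotalOrder C r]

theorem sum_mul_max_sub_sum_filter_le {l : C → ℝ} (hl : ∀ b, 0 ≤ l b) (s : Finset C)
    {c : ℝ} (hc : 0 ≤ c) :
    ∑ a ∈ s, l a * max 0 (c - ∑ b ∈ s with ¬ r a b, l b) ≤ c ^ 2 / 2 := by
  let := linearOrderOfSTO r
  induction s using Finset.induction_on_min generalizing c with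
  | empty => simp; positivity
  | insert a s ha ih =>
    have has : a ∉ s := fun h => irrefl_of r a (ha a h)
    have htop : ∑ b ∈ insert a s with ¬ r a b, l b = l a := by
      rw [filter_insert, if_pos (irrefl_of r a),
        filter_eq_empty_iff.2 fun b hb => not_not.2 (show r a b from ha b hb),
        insert_empty, sum_singleton]
    have hrest : ∀ x ∈ s,
        ∑ b ∈ insert a s with ¬ r x b, l b = l a + ∑ b ∈ s with ¬ r x b, l b := fun x hx => by
      rw [filter_insert, if_pos (asymm_of r (ha x hx)),
        sum_insert fun h => has (mem_filter.1 h).1]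
    set c' := max 0 (c - l a) with hc'
    have hshift : ∀ x ∈ s, max 0 (c - ∑ b ∈ insert a s with ¬ r x b, l b)
        ≤ max 0 (c' - ∑ b ∈ s with ¬ r x b, l b) := fun x hx => by
      rw [hrest x hx]
      exact max_le_max le_rfl (by linarith [le_max_right 0 (c - l a)])
    calc ∑ x ∈ insert a s, l x * max 0 (c - ∑ b ∈ insert a s with ¬ r x b, l b)
        = l a * c' + ∑ x ∈ s, l x * max 0 (c - ∑ b ∈ insert a s with ¬ r x b, l b) := by
          rw [sum_insert has, htop]
      _ ≤ l a * c' + c' ^ 2 / 2 := by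
          gcongr
          exact (sum_le_sum fun x hx => mul_le_mul_of_nonneg_left (hshift x hx) (hl x)).trans
            (ih (le_max_left _ _))
      _ ≤ c ^ 2 / 2 := by
          rcases le_total c (l a) with h | h
          · rw [hc', max_eq_left (sub_nonpos.2 h)]; nlinarith
          · rw [hc', max_eq_right (sub_nonneg.2 h)]; nlinarith [hl a]

theorem min_le_sum_filter_sum_filter_lt [Fintype C] {l : C → ℝ} (hl : l ∈ stdSimplex ℝ C)
    (t : ℝ) : min t 1 ≤ ∑ b with ∑ c with r c b, l c < t, l b := by
  by_cases hall : ∀ b, ∑ c with r c b, l c < t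
  · rw [filter_true_of_mem fun b _ => hall b, hl.2]
    exact min_le_right _ _
  push Not at hall
  obtain ⟨b₀, hb₀, hmax⟩ :=
    (Finite.wellFounded_of_trans_of_irrefl r).has_min {b | t ≤ ∑ c with r c b, l c} hall
  calc min t 1 ≤ ∑ c with r c b₀, l c := (min_le_left _ _).trans hb₀
    _ ≤ _ := sum_le_sum_of_subset_of_nonneg (fun c hc => mem_filter.2
        ⟨mem_univ c, lt_of_not_ge fun h => hmax c h (mem_filter.1 hc).2⟩) fun c _ _ => hl.1 c

theorem one_sub_sum_filter_sum_filter_lt_pow_le [Fintype C] {l : C → ℝ}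
    (hl : l ∈ stdSimplex ℝ C) (t : ℝ) (K : ℕ) :
    (1 - ∑ b with ∑ c with r c b, l c < t, l b) ^ K ≤ Real.exp (-t) ^ K := by
  have hle : ∑ b with ∑ c with r c b, l c < t, l b ≤ 1 :=
    hl.2 ▸ sum_le_sum_of_subset_of_nonneg (subset_univ _) fun b _ _ => hl.1 b
  have hmin := min_le_sum_filter_sum_filter_lt r hl t
  refine pow_le_pow_left₀ (by linarith) ?_ K
  rcases min_cases t 1 with ⟨h, -⟩ | ⟨h, -⟩ <;> rw [h] at hmin
  · linarith [Real.add_one_le_exp (-t)]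
  · linarith [Real.exp_pos (-t)]

theorem sum_filter_not_le_sum_filter [Fintype C] {l : C → ℝ} (hl : ∀ b, 0 ≤ l b) {a b : C}
    (hab : r a b) : ∑ c with ¬ r a c, l c ≤ ∑ c with r c b, l c := by
  refine sum_le_sum_of_subset_of_nonneg (fun c hc => ?_) fun c _ _ => hl c
  simp only [mem_filter, mem_univ, true_and] at hc ⊢
  rcases trichotomous_of r a c with h | rfl | h
  · exact absurd h hc
  · exact hab
  · exact trans_of r h hab

end StrictTotalOrder

theorem exists_stable_lottery {V C : Type*} [Fintype V] [Fintype C] [Nonempty C]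
    (pref : V → C → C → Prop) [∀ v, IsStrictTotalOrder C (pref v)] {c : ℝ} (hc : 0 ≤ c) :
    ∃ l ∈ stdSimplex ℝ C, ∀ a,
      ∑ v, max 0 (c - ∑ b with ¬ pref v a b, l b) ≤ Fintype.card V * (c ^ 2 / 2) := by
  set F : (C → ℝ) → C → ℝ := fun l a => ∑ v, max 0 (c - ∑ b with ¬ pref v a b, l b) with hF
  have hFconv : ∀ a, ConvexOn ℝ (stdSimplex ℝ C) (F · a) := fun a =>
    (ConvexOn.sum convex_univ fun v _ => convexOn_max_zero_sub_sum _ c).subset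
      (Set.subset_univ _) (convex_stdSimplex ℝ C)
  have hFcont : ∀ a, Continuous (F · a) := fun a => by simp only [hF]; fun_prop
  have hne : (stdSimplex ℝ C).Nonempty := ⟨_, single_mem_stdSimplex ℝ (Classical.arbitrary C)⟩
  obtain ⟨l, hl, ξ, hξ, hsaddle⟩ := Sion.exists_isSaddlePointOn
    (f := fun l ξ => ∑ a, ξ a * F l a) hne (convex_stdSimplex ℝ C) (isCompact_stdSimplex ℝ C)
    (fun ξ _ => (continuous_finsetSum _ fun a _ =>
      (hFcont a).const_mul _).continuousOn.lowerSemicontinuousOn)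
    (fun ξ hξ => (ConvexOn.sum (convex_stdSimplex ℝ C) fun a _ =>
      (hFconv a).smul (hξ.1 a)).quasiconvexOn)
    (convex_stdSimplex ℝ C) hne (isCompact_stdSimplex ℝ C)
    (fun l _ => (continuous_finsetSum _ fun a _ =>
      (continuous_apply a).mul continuous_const).continuousOn.upperSemicontinuousOn)
    (fun l _ => by
      simpa only [mul_comm] using (concaveOn_sum_mul (F l) (convex_stdSimplex ℝ C)).quasiconcaveOn)
  refine ⟨l, hl, fun a => ?_⟩
  calc F l a ≤ ∑ a', ξ a' * F ξ a' := by
        simpa [Pi.single_apply] using hsaddle ξ hξ _ (single_mem_stdSimplex ℝ a)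
    _ = ∑ v, ∑ a', ξ a' * max 0 (c - ∑ b with ¬ pref v a' b, ξ b) := by
      simp only [hF, mul_sum]; exact sum_comm
    _ ≤ ∑ v : V, c ^ 2 / 2 := sum_le_sum fun v _ =>
      sum_mul_max_sub_sum_filter_le (pref v) hξ.1 univ hc
    _ = Fintype.card V * (c ^ 2 / 2) := by simp

theorem card_filter_exists_mul_le {V C : Type*} [Fintype V] [Fintype C]
    (pref : V → C → C → Prop) [∀ v, IsStrictTotalOrder C (pref v)] {l : C → ℝ}
    (hl : ∀ b, 0 ≤ l b) (t : ℝ) (a : C) :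
    #{v | ∃ b, pref v a b ∧ ∑ c with pref v c b, l c < t} * t ≤
      ∑ v, max 0 (2 * t - ∑ b with ¬ pref v a b, l b) := by
  rw [← nsmul_eq_mul]
  refine (card_nsmul_le_sum _ _ t fun v hv => ?_).trans
    (sum_le_sum_of_subset_of_nonneg (subset_univ _) fun v _ _ => le_max_left _ _)
  obtain ⟨b, hab, hb⟩ := (mem_filter.1 hv).2
  have := sum_filter_not_le_sum_filter (pref v) hl hab
  exact le_max_of_le_right (by linarith)

theorem exists_multiset_card_filter_le {V C : Type*} [Fintype C] {l : C → ℝ}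
    (hl : l ∈ stdSimplex ℝ C) (A : V → Finset C) (K : ℕ) (W : Finset V) :
    ∃ T : Multiset C, Multiset.card T = K ∧
      (#{v ∈ W | ∀ b ∈ T, b ∉ A v} : ℝ) ≤ ∑ v ∈ W, (1 - ∑ b ∈ A v, l b) ^ K := by
  induction K generalizing W with
  | zero => exact ⟨0, rfl, by simp⟩
  | succ K ih =>
    set x : V → ℝ := fun v => 1 - ∑ b ∈ A v, l b
    have hmiss : ∀ v, ∑ b with b ∉ A v, l b = x v := fun v => by
      simp only [x]
      rw [← hl.2, ← sum_filter_add_sum_filter_not univ (· ∈ A v), filter_mem_eq_inter,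
        univ_inter]
      ring
    -- the expected number of voters of `W` missed by one more draw from `l`
    have havg : ∑ b, l b * ∑ v ∈ W with b ∉ A v, x v ^ K = ∑ v ∈ W, x v ^ (K + 1) := by
      calc ∑ b, l b * ∑ v ∈ W with b ∉ A v, x v ^ K
          = ∑ v ∈ W, (∑ b with b ∉ A v, l b) * x v ^ K := by
            simp only [mul_sum, sum_mul, sum_filter, ite_mul, zero_mul, mul_ite, mul_zero]
            exact sum_comm
        _ = _ := sum_congr rfl fun v _ => by rw [hmiss, pow_succ']
    obtain ⟨b₀, hb₀⟩ := exists_le_sum_mul hl fun b => ∑ v ∈ W with b ∉ A v, x v ^ K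
    obtain ⟨T, hT, hTle⟩ := ih {v ∈ W | b₀ ∉ A v}
    refine ⟨b₀ ::ₘ T, by simp [hT], ?_⟩
    have hfilter : {v ∈ W | ∀ b ∈ b₀ ::ₘ T, b ∉ A v} =
        {v ∈ {v ∈ W | b₀ ∉ A v} | ∀ b ∈ T, b ∉ A v} := by
      ext v; simp [and_assoc]
    rw [hfilter]
    exact hTle.trans (hb₀.trans havg.le)

theorem hasUndom.pos {k : ℕ} {α : ℝ} (h : hasUndom k α) : 0 < α := by
  obtain ⟨S, -, hS⟩ := h 1 1 (fun _ => (· < ·)) (fun _ => inferInstance) one_pos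
  exact (hS 0).trans_le' (by positivity)

theorem hasUndom_of_one_lt (k : ℕ) {α : ℝ} (hα : 1 < α) : hasUndom k α := by
  intro n m pref _ hn
  refine ⟨∅, by simp, fun a => (div_le_one_of_le₀ ?_ n.cast_nonneg).trans_lt hα⟩
  exact_mod_cast (card_filter_le _ _).trans (card_univ.trans (Fintype.card_fin n)).le

theorem hasUndom.exists_committee_of_finset {k : ℕ} {α : ℝ} (h : hasUndom k α) {n m : ℕ}
    (pref : Fin n → Fin m → Fin m → Prop) (hpref : ∀ v, IsStrictTotalOrder (Fin m) (pref v))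
    (R : Finset (Fin n)) :
    ∃ S : Finset (Fin m), #S ≤ k ∧ ∀ a, (#{v ∈ R | ∀ b ∈ S, pref v a b} : ℝ) ≤ α * #R := by
  rcases R.eq_empty_or_nonempty with rfl | hR
  · exact ⟨∅, by simp, fun a => by simp⟩
  set e := R.equivFin
  obtain ⟨S, hSk, hS⟩ := h #R m (fun w => pref (e.symm w)) (fun w => hpref _) hR.card_pos
  refine ⟨S, hSk, fun a => ?_⟩
  have hcard : #{w | ∀ b ∈ S, pref (e.symm w) a b} = #{v ∈ R | ∀ b ∈ S, pref v a b} := by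
    refine card_bij (fun w _ => e.symm w) (fun w hw => ?_)
      (fun w₁ _ w₂ _ h => e.symm.injective (Subtype.ext h)) fun v hv => ?_
    · exact mem_filter.2 ⟨(e.symm w).2, (mem_filter.1 hw).2⟩
    · rw [mem_filter] at hv
      exact ⟨e ⟨v, hv.1⟩, mem_filter.2 ⟨mem_univ _, by simpa using hv.2⟩, by simp⟩
  have := hS a
  rw [hcard, div_lt_iff₀ (by exact_mod_cast hR.card_pos)] at this
  exact this.le

theorem hasUndom.add {k' K : ℕ} {α' t α : ℝ} (hα' : hasUndom k' α') (ht : 0 < t)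
    (hα : Real.exp (-t) ^ K * α' + 2 * t < α) : hasUndom (K + k') α := by
  intro n m pref hpref hn
  rcases isEmpty_or_nonempty (Fin m) with _ | _
  · exact ⟨∅, by simp, fun a => isEmptyElim a⟩
  obtain ⟨l, hl, hstable⟩ := exists_stable_lottery pref (c := 2 * t) (by positivity)
  set A : Fin n → Finset (Fin m) := fun v => {b | ∑ c with pref v c b, l c < t}
  obtain ⟨T, hTK, hT⟩ := exists_multiset_card_filter_le hl A K univ
  set R : Finset (Fin n) := {v | ∀ b ∈ T, b ∉ A v}
  have hR : (#R : ℝ) ≤ Real.exp (-t) ^ K * n := by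
    calc (#R : ℝ) ≤ ∑ v, (1 - ∑ b ∈ A v, l b) ^ K := by convert hT
      _ ≤ ∑ v : Fin n, Real.exp (-t) ^ K :=
        sum_le_sum fun v _ => one_sub_sum_filter_sum_filter_lt_pow_le (pref v) hl t K
      _ = _ := by simp [mul_comm]
  obtain ⟨S, hSk, hS⟩ := hα'.exists_committee_of_finset pref hpref R
  refine ⟨T.toFinset ∪ S, (card_union_le _ _).trans
    (add_le_add ((Multiset.toFinset_card_le T).trans hTK.le) hSk), fun a => ?_⟩
  set D : Finset (Fin n) := {v | ∀ b ∈ T.toFinset ∪ S, pref v a b}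
  have hDR : #{v ∈ D | v ∈ R} ≤ #{v ∈ R | ∀ b ∈ S, pref v a b} := card_le_card fun v hv => by
    simp only [D, mem_filter, mem_union] at hv ⊢
    exact ⟨hv.2, fun b hb => hv.1.2 b (Or.inr hb)⟩
  have hDnotR : (#{v ∈ D | v ∉ R} : ℝ) ≤ 2 * t * n := by
    refine le_of_mul_le_mul_right ?_ ht
    calc (#{v ∈ D | v ∉ R} : ℝ) * t ≤ Fintype.card (Fin n) * ((2 * t) ^ 2 / 2) := by
          refine (mul_le_mul_of_nonneg_right (Nat.cast_le.2 (card_le_card fun v hv => ?_))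
            ht.le).trans ((card_filter_exists_mul_le pref hl.1 t a).trans (hstable a))
          simp only [D, R, A, mem_filter, mem_union, Multiset.mem_toFinset, mem_univ,
            true_and] at hv ⊢
          obtain ⟨hD, hnotR⟩ := hv
          push Not at hnotR
          obtain ⟨b, hbT, hbA⟩ := hnotR
          exact ⟨b, hD b (Or.inl hbT), hbA⟩
      _ = 2 * t * n * t := by rw [Fintype.card_fin]; ring
  rw [div_lt_iff₀ (by exact_mod_cast hn)]
  calc (#D : ℝ) = #{v ∈ D | v ∈ R} + #{v ∈ D | v ∉ R} := by
        exact_mod_cast (card_filter_add_card_filter_not (s := D) (p := (· ∈ R))).symm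
    _ ≤ α' * (Real.exp (-t) ^ K * n) + 2 * t * n := add_le_add
        (((Nat.cast_le.2 hDR).trans (hS a)).trans (mul_le_mul_of_nonneg_left hR hα'.pos.le))
        hDnotR
    _ < α * n := by nlinarith [(Nat.cast_pos.2 hn : (0 : ℝ) < n)]

theorem csInf_le_mul_csInf_add {S T : Set ℝ} (hS : BddBelow S) (hT : T.Nonempty) {β c : ℝ}
    (hβ : 0 < β) (h : ∀ a ∈ T, ∀ x, β * a + c < x → x ∈ S) : sInf S ≤ β * sInf T + c := by
  have hST : ∀ a ∈ T, (sInf S - c) / β ≤ a := fun a ha => by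
    have := le_of_forall_gt_imp_ge_of_dense fun x hx => csInf_le hS (h a ha x hx)
    rw [div_le_iff₀ hβ]
    linarith
  have := le_csInf hT hST
  rw [div_le_iff₀ hβ] at this
  linarith

/-- Let `α(k)` be the infimum over all `α` such that every election admits an
`α`-undominated committee of size `k`. Then for all integers `1 ≤ k' < k`,
`α(k) ≤ (k'/k)²·α(k') + 4·ln(k/k')/(k - k')`. -/
theorem stmt19 (k k' : ℕ) (hk' : 1 ≤ k') (hkk : k' < k) :
    sInf {α : ℝ | hasUndom k α} ≤
      ((k' : ℝ) / (k : ℝ)) ^ 2 * sInf {α : ℝ | hasUndom k' α}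
        + 4 * Real.log ((k : ℝ) / (k' : ℝ)) / ((k : ℝ) - (k' : ℝ)) := by
  have hk'0 : (0 : ℝ) < k' := by exact_mod_cast hk'
  have hkk' : (k' : ℝ) < k := by exact_mod_cast hkk
  set t : ℝ := 2 * Real.log (k / k') / (k - k') with ht_def
  have ht : 0 < t :=
    div_pos (mul_pos two_pos (Real.log_pos ((one_lt_div hk'0).2 hkk'))) (sub_pos.2 hkk')
  have hexp : Real.exp (-t) ^ (k - k') = ((k' : ℝ) / k) ^ 2 := by
    have htk : ((k - k' : ℕ) : ℝ) * -t = -((2 : ℕ) * Real.log (k / k')) := by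
      rw [Nat.cast_sub hkk.le, ht_def]
      field_simp [(sub_pos.2 hkk').ne']
      push_cast
      ring
    rw [← Real.exp_nat_mul, htk, Real.exp_neg, Real.exp_nat_mul,
      Real.exp_log (div_pos (hk'0.trans hkk') hk'0), ← inv_pow, inv_div]
  have hstep : ∀ α' ∈ {α : ℝ | hasUndom k' α}, ∀ α, ((k' : ℝ) / k) ^ 2 * α' + 2 * t < α →
      α ∈ {α : ℝ | hasUndom k α} := fun α' hα' α hα =>
    Nat.sub_add_cancel hkk.le ▸ hα'.add ht (hexp ▸ hα)
  have := csInf_le_mul_csInf_add ⟨0, fun α hα => hα.pos.le⟩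
    ⟨2, hasUndom_of_one_lt k' one_lt_two⟩ (pow_pos (div_pos hk'0 (hk'0.trans hkk')) 2) hstep
  rwa [ht_def, mul_div_assoc', ← mul_assoc, show (2 : ℝ) * 2 = 4 by norm_num] at this
end
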